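/- Let d ≥ 1, let Δ ⊆ ℝ^d be a reflexive polytope, and let Δ = Δ_1 + … + Δ_r be a nef partition: each Δ_i is a lattice polytope containing 0, and Δ_i ∩ Δ_j = {0} for i ≠ j. For each i let E_i be the set of extreme points e of Δ* with min_{x ∈ Δ_i} ⟨x, e⟩ = -1, and let ∇_i be the convex hull of E_i ∪ {0}. Define C_Δ = {(λ_1, …, λ_r, λ_1 x_1 + … + λ_r x_r) ∈ ℝ^r × ℝ^d : λ_i ≥ 0, x_i ∈ Δ_i for all i} and C_∇ = {(μ_1, …, μ_r, μ_1 y_1 + … + μ_r y_r) ∈ ℝ^r × ℝ^d : μ_i ≥ 0, y_i ∈ ∇_i for all i}. Then C_∇ equals the dual cone {(b, n) ∈ ℝ^r × ℝ^d : Σ_{i=1}^r a_i b_i + ⟨m, n⟩ ≥ 0 for all (a, m) ∈ C_Δ}. -/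

import Mathlib

open Pointwise

/-- The standard inner product on `ℝ^d`. -/
def dotp {d : ℕ} (x y : Fin d → ℝ) : ℝ := ∑ i, x i * y i

/-- A point of `ℝ^d` with integer coordinates (a lattice point of `ℤ^d`). -/
def IsLatticePt {d : ℕ} (x : Fin d → ℝ) : Prop := ∀ i, ∃ n : ℤ, x i = (n : ℝ)

/-- A lattice polytope: the convex hull of a finite set of lattice points. -/
def IsLatticePolytope {d : ℕ} (P : Set (Fin d → ℝ)) : Prop :=
  ∃ S : Finset (Fin d → ℝ), (∀ x ∈ S, IsLatticePt x) ∧ P = convexHull ℝ (S : Set (Fin d → ℝ))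

/-- The dual set `A* = {x : ⟨y,x⟩ ≥ -1 ∀ y ∈ A}`. -/
def dualSet {d : ℕ} (A : Set (Fin d → ℝ)) : Set (Fin d → ℝ) :=
  {x | ∀ y ∈ A, -1 ≤ dotp y x}

/-- A reflexive polytope: a lattice polytope with `0` in its interior whose dual is
also a lattice polytope. -/
def IsReflexivePolytope {d : ℕ} (P : Set (Fin d → ℝ)) : Prop :=
  IsLatticePolytope P ∧ (0 : Fin d → ℝ) ∈ interior P ∧ IsLatticePolytope (dualSet P)

/-- The minimum (infimum) of `⟨x, z⟩` over `x ∈ A`. -/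
noncomputable def minDot {d : ℕ} (A : Set (Fin d → ℝ)) (z : Fin d → ℝ) : ℝ :=
  sInf ((fun x => dotp x z) '' A)

/-- The Gorenstein cone `C_Δ ⊆ ℝ^r × ℝ^d` associated to polytopes `Δ_1, …, Δ_r`
(Definition 4.1): points `(λ_1, …, λ_r, λ_1 x_1 + ⋯ + λ_r x_r)` with `λ_i ≥ 0`,
`x_i ∈ Δ_i`. -/
def gorensteinCone {d r : ℕ} (D : Fin r → Set (Fin d → ℝ)) :
    Set ((Fin r → ℝ) × (Fin d → ℝ)) :=
  {p | ∃ (lam : Fin r → ℝ) (x : Fin r → Fin d → ℝ),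
      (∀ i, 0 ≤ lam i) ∧ (∀ i, x i ∈ D i) ∧ p = (lam, ∑ i, lam i • x i)}

/-- The extended pairing on `ℝ^r × ℝ^d`: `⟨(a,m),(b,n)⟩ = Σ a_i b_i + ⟨m,n⟩`. -/
def extPair {d r : ℕ} (p q : (Fin r → ℝ) × (Fin d → ℝ)) : ℝ :=
  (∑ i, p.1 i * q.1 i) + dotp p.2 q.2

/-!
The dual cone of `C_Δ` is `{(b, n) | -min_{x ∈ Δ_i} ⟨x, n⟩ ≤ b_i for all i}`, and `⟨x, y⟩ ≥ -δ_ij`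
for `x ∈ Δ_i`, `y ∈ ∇_j`, which gives `C_∇ ⊆ C_Δ^∨`. Conversely, since `Δ*` is a lattice
polytope, every nonzero vertex `e` of `Δ*` has `min_{Δ_i} ⟨·, e⟩ = -1` for some `i` and `= 0` for
all others, so `Δ*` is the convex hull of `∇_1 ∪ ⋯ ∪ ∇_r`. Given `(b, n)` in the dual cone, put
`t = -∑ min_{Δ_i} ⟨·, n⟩`: if `t = 0` then `n = 0` because `0` is interior to `Δ`; otherwise
writing `n / t` in that hull forces the weight on `∇_i` to be `-min_{Δ_i} ⟨·, n⟩ / t ≤ b_i / t`.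
-/

lemma eq_zero_of_mem_extremePoints_of_two_smul_mem {E : Type*} [AddCommGroup E] [Module ℝ E]
    {A : Set E} {e : E} (he : e ∈ A.extremePoints ℝ) (h0 : (0 : E) ∈ A) (h2 : (2 : ℝ) • e ∈ A) :
    e = 0 := by
  refine (mem_extremePoints_iff_left.1 he).2 0 h0 _ h2 ⟨1 / 2, 1 / 2, ?_, ?_, ?_, ?_⟩ |>.symm
  all_goals norm_num [smul_smul]

section Dotp

variable {d : ℕ}

lemma dotp_eq_dotProduct (x y : Fin d → ℝ) : dotp x y = x ⬝ᵥ y := rfl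

@[simp]
lemma dotp_zero_left (z : Fin d → ℝ) : dotp 0 z = 0 := zero_dotProduct z

@[simp]
lemma dotp_zero_right (x : Fin d → ℝ) : dotp x 0 = 0 := dotProduct_zero x

lemma dotp_smul_left (c : ℝ) (x z : Fin d → ℝ) : dotp (c • x) z = c * dotp x z :=
  smul_dotProduct c x z

lemma dotp_smul_right (c : ℝ) (x z : Fin d → ℝ) : dotp x (c • z) = c * dotp x z :=
  dotProduct_smul c x z

lemma dotp_sum_left {ι : Type*} (s : Finset ι) (x : ι → Fin d → ℝ) (z : Fin d → ℝ) :
    dotp (∑ j ∈ s, x j) z = ∑ j ∈ s, dotp (x j) z :=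
  sum_dotProduct s x z

lemma dotp_sum_right {ι : Type*} (s : Finset ι) (x : Fin d → ℝ) (z : ι → Fin d → ℝ) :
    dotp x (∑ j ∈ s, z j) = ∑ j ∈ s, dotp x (z j) :=
  dotProduct_sum x s z

lemma isLinearMap_dotp_left (z : Fin d → ℝ) : IsLinearMap ℝ (fun x => dotp x z) :=
  ⟨fun x y => add_dotProduct x y z, fun c x => dotp_smul_left c x z⟩

lemma isLinearMap_dotp_right (x : Fin d → ℝ) : IsLinearMap ℝ (dotp x) :=
  ⟨fun y z => dotProduct_add x y z, fun c z => dotp_smul_right c x z⟩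

lemma IsLatticePt.exists_int_dotp_eq {x y : Fin d → ℝ} (hx : IsLatticePt x)
    (hy : IsLatticePt y) : ∃ k : ℤ, dotp x y = k := by
  choose m hm using hx
  choose n hn using hy
  exact ⟨∑ i, m i * n i, by simp [dotp, hm, hn]⟩

lemma eq_zero_of_forall_dotp_nonneg {A : Set (Fin d → ℝ)} {z : Fin d → ℝ}
    (hA : (0 : Fin d → ℝ) ∈ interior A) (hz : ∀ y ∈ A, 0 ≤ dotp y z) : z = 0 := by
  have hcont : Continuous fun c : ℝ => -(c • z) := by fun_prop
  have hlim : Filter.Tendsto (fun c : ℝ => -(c • z)) (nhdsWithin 0 (Set.Ioi 0)) (nhds 0) := by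
    simpa using (hcont.tendsto 0).mono_left nhdsWithin_le_nhds
  obtain ⟨c, hcA, hc⟩ :=
    ((hlim.eventually (mem_interior_iff_mem_nhds.1 hA)).and self_mem_nhdsWithin).exists
  have hzz : c * dotp z z ≤ 0 := by
    simpa [neg_smul, dotp_eq_dotProduct] using hz _ hcA
  have hzz' : 0 ≤ dotp z z := Fintype.sum_nonneg fun i => mul_self_nonneg (z i)
  exact dotProduct_self_eq_zero.1 (le_antisymm (nonpos_of_mul_nonpos_right hzz hc) hzz')

end Dotp

section MinDot

variable {d : ℕ}

lemma le_minDot {A : Set (Fin d → ℝ)} {z : Fin d → ℝ} {c : ℝ} (hA : A.Nonempty)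
    (h : ∀ x ∈ A, c ≤ dotp x z) : c ≤ minDot A z :=
  le_csInf (hA.image _) (Set.forall_mem_image.2 h)

lemma minDot_smul (A : Set (Fin d → ℝ)) (z : Fin d → ℝ) {c : ℝ} (hc : 0 ≤ c) :
    minDot A (c • z) = c * minDot A z := by
  have hcomp : (fun x => dotp x (c • z)) = (c • ·) ∘ fun x => dotp x z :=
    funext fun x => dotp_smul_right c x z
  rw [minDot, hcomp, Set.image_comp, Set.image_smul, Real.sInf_smul_of_nonneg hc]
  rfl

lemma IsMinOn.minDot_eq {A : Set (Fin d → ℝ)} {z v : Fin d → ℝ} (hv : v ∈ A)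
    (hmin : IsMinOn (fun x => dotp x z) A v) : minDot A z = dotp v z :=
  IsLeast.csInf_eq ⟨Set.mem_image_of_mem _ hv, Set.forall_mem_image.2 hmin⟩

lemma zero_mem_dualSet (A : Set (Fin d → ℝ)) : (0 : Fin d → ℝ) ∈ dualSet A := by
  intro y _
  simp

end MinDot

namespace IsLatticePolytope

variable {d : ℕ} {P : Set (Fin d → ℝ)}

lemma exists_isMinOn (hP : IsLatticePolytope P) (hne : P.Nonempty) (z : Fin d → ℝ) :
    ∃ v ∈ P, IsLatticePt v ∧ IsMinOn (fun x => dotp x z) P v := by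
  obtain ⟨S, hS, rfl⟩ := hP
  have hSne : S.Nonempty := by simpa using convexHull_nonempty_iff.1 hne
  obtain ⟨v, hv, hmin⟩ := S.exists_min_image (fun x => dotp x z) hSne
  exact ⟨v, subset_convexHull ℝ _ hv, hS v hv, isMinOn_iff.2 fun x hx =>
    convexHull_min hmin (convex_halfSpace_ge (isLinearMap_dotp_left z) _) hx⟩

lemma minDot_le (hP : IsLatticePolytope P) {x : Fin d → ℝ} (hx : x ∈ P) (z : Fin d → ℝ) :
    minDot P z ≤ dotp x z := by
  obtain ⟨v, hv, -, hmin⟩ := hP.exists_isMinOn ⟨x, hx⟩ z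
  rw [hmin.minDot_eq hv]
  exact hmin hx

lemma minDot_nonpos (hP : IsLatticePolytope P) (h0 : (0 : Fin d → ℝ) ∈ P) (z : Fin d → ℝ) :
    minDot P z ≤ 0 := by
  simpa using hP.minDot_le h0 z

lemma exists_int_minDot_eq (hP : IsLatticePolytope P) (hne : P.Nonempty) {z : Fin d → ℝ}
    (hz : IsLatticePt z) : ∃ k : ℤ, minDot P z = k := by
  obtain ⟨v, hv, hvlat, hmin⟩ := hP.exists_isMinOn hne z
  rw [hmin.minDot_eq hv]
  exact hvlat.exists_int_dotp_eq hz

lemma isLatticePt_of_mem_extremePoints (hP : IsLatticePolytope P) {e : Fin d → ℝ}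
    (he : e ∈ P.extremePoints ℝ) : IsLatticePt e := by
  obtain ⟨S, hS, rfl⟩ := hP
  exact hS e (extremePoints_convexHull_subset he)

lemma convexHull_extremePoints (hP : IsLatticePolytope P) :
    convexHull ℝ (P.extremePoints ℝ) = P := by
  obtain ⟨S, -, rfl⟩ := hP
  have hfin : (Set.extremePoints ℝ (convexHull ℝ (S : Set (Fin d → ℝ)))).Finite :=
    S.finite_toSet.subset extremePoints_convexHull_subset
  rw [← (hfin.isClosed_convexHull ℝ).closure_eq]
  exact closure_convexHull_extremePoints (S.finite_toSet.isCompact_convexHull ℝ)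
    (convex_convexHull ℝ _)

end IsLatticePolytope

section GorensteinCone

variable {d r : ℕ} {N : Fin r → Set (Fin d → ℝ)}

lemma single_mem_gorensteinCone (h0 : ∀ j, (0 : Fin d → ℝ) ∈ N j) {i : Fin r}
    {x : Fin d → ℝ} (hx : x ∈ N i) : (Pi.single i 1, x) ∈ gorensteinCone N := by
  refine ⟨Pi.single i 1, Pi.single i x, fun j => ?_, fun j => ?_, by simp⟩
  · exact (Pi.single_nonneg.2 zero_le_one : (0 : Fin r → ℝ) ≤ Pi.single i 1) j
  · by_cases hj : j = i
    · subst hj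
      simpa using hx
    · simpa [hj] using h0 j

lemma mk_zero_mem_gorensteinCone (h0 : ∀ j, (0 : Fin d → ℝ) ∈ N j) {b : Fin r → ℝ}
    (hb : 0 ≤ b) : (b, 0) ∈ gorensteinCone N :=
  ⟨b, 0, hb, h0, by simp⟩

lemma smul_mem_gorensteinCone {p : (Fin r → ℝ) × (Fin d → ℝ)} (hp : p ∈ gorensteinCone N)
    {c : ℝ} (hc : 0 ≤ c) : c • p ∈ gorensteinCone N := by
  obtain ⟨μ, y, hμ, hy, rfl⟩ := hp
  exact ⟨c • μ, y, fun i => mul_nonneg hc (hμ i), hy, by simp [Finset.smul_sum, smul_smul]⟩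

lemma Convex.exists_add_smul_eq {E : Type*} [AddCommGroup E] [Module ℝ E] {s : Set E}
    (hs : Convex ℝ s) {p q : ℝ} (hp : 0 ≤ p) (hq : 0 ≤ q) {x y : E} (hx : x ∈ s) (hy : y ∈ s) :
    ∃ z ∈ s, (p + q) • z = p • x + q • y := by
  rw [← Set.mem_smul_set, hs.add_smul hp hq]
  exact Set.add_mem_add (Set.smul_mem_smul_set hx) (Set.smul_mem_smul_set hy)

lemma add_mem_gorensteinCone (hN : ∀ i, Convex ℝ (N i)) {p q : (Fin r → ℝ) × (Fin d → ℝ)}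
    (hp : p ∈ gorensteinCone N) (hq : q ∈ gorensteinCone N) : p + q ∈ gorensteinCone N := by
  obtain ⟨μ, y, hμ, hy, rfl⟩ := hp
  obtain ⟨ν, w, hν, hw, rfl⟩ := hq
  choose z hz hzeq using fun i => (hN i).exists_add_smul_eq (hμ i) (hν i) (hy i) (hw i)
  refine ⟨μ + ν, z, fun i => add_nonneg (hμ i) (hν i), hz, ?_⟩
  simp [hzeq, Finset.sum_add_distrib]

lemma convex_gorensteinCone (hN : ∀ i, Convex ℝ (N i)) : Convex ℝ (gorensteinCone N) :=
  fun _ hp _ hq _ _ ha hb _ =>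
    add_mem_gorensteinCone hN (smul_mem_gorensteinCone hp ha) (smul_mem_gorensteinCone hq hb)

lemma mem_gorensteinCone_of_le (hN : ∀ i, Convex ℝ (N i)) (h0 : ∀ j, (0 : Fin d → ℝ) ∈ N j)
    {a b : Fin r → ℝ} {n : Fin d → ℝ} (hp : (a, n) ∈ gorensteinCone N) (hab : a ≤ b) :
    (b, n) ∈ gorensteinCone N := by
  simpa using add_mem_gorensteinCone hN hp (mk_zero_mem_gorensteinCone h0 (sub_nonneg.2 hab))

end GorensteinCone

section NefPartition

variable {d r : ℕ} {D : Fin r → Set (Fin d → ℝ)}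

lemma mem_dual_gorensteinCone_iff (hD : ∀ i, IsLatticePolytope (D i))
    (h0 : ∀ i, (0 : Fin d → ℝ) ∈ D i) {b : Fin r → ℝ} {n : Fin d → ℝ} :
    (∀ p ∈ gorensteinCone D, 0 ≤ extPair p (b, n)) ↔ ∀ i, -minDot (D i) n ≤ b i := by
  constructor
  · intro h i
    refine neg_le.2 (le_minDot ⟨0, h0 i⟩ fun x hx => ?_)
    have := h _ (single_mem_gorensteinCone h0 hx)
    simp only [extPair, Pi.single_apply, ite_mul, one_mul, zero_mul, Finset.sum_ite_eq',
      Finset.mem_univ, if_true] at this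
    linarith
  · rintro h _ ⟨lam, x, hlam, hx, rfl⟩
    rw [extPair, dotp_sum_left, ← Finset.sum_add_distrib]
    refine Finset.sum_nonneg fun i _ => ?_
    rw [dotp_smul_left, ← mul_add]
    exact mul_nonneg (hlam i) (by linarith [h i, (hD i).minDot_le (hx i) n])

lemma sum_minDot_le_dotp (hD : ∀ i, IsLatticePolytope (D i)) {y : Fin d → ℝ}
    (hy : y ∈ ∑ i, D i) (z : Fin d → ℝ) : ∑ i, minDot (D i) z ≤ dotp y z := by
  obtain ⟨g, hg, rfl⟩ := (Set.mem_fintype_sum _ _).1 hy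
  rw [dotp_sum_left]
  exact Finset.sum_le_sum fun i _ => (hD i).minDot_le (hg i) z

lemma mem_dualSet_sum_iff (hD : ∀ i, IsLatticePolytope (D i))
    (h0 : ∀ i, (0 : Fin d → ℝ) ∈ D i) {z : Fin d → ℝ} :
    z ∈ dualSet (∑ i, D i) ↔ -1 ≤ ∑ i, minDot (D i) z := by
  refine ⟨fun hz => ?_, fun hz y hy => hz.trans (sum_minDot_le_dotp hD hy z)⟩
  choose v hv _ hmin using fun i => (hD i).exists_isMinOn ⟨0, h0 i⟩ z
  have hvsum : ∑ i, v i ∈ ∑ i, D i := (Set.mem_fintype_sum _ _).2 ⟨v, hv, rfl⟩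
  simpa [(hmin _).minDot_eq (hv _), dotp_sum_left] using hz _ hvsum

lemma minDot_eq_neg_ite (hD : ∀ i, IsLatticePolytope (D i)) (h0 : ∀ i, (0 : Fin d → ℝ) ∈ D i)
    {e : Fin d → ℝ} (he : e ∈ dualSet (∑ i, D i)) {i : Fin r} (hi : minDot (D i) e = -1)
    (j : Fin r) : minDot (D j) e = -(if j = i then 1 else 0) := by
  by_cases hji : j = i
  · simp [hji, hi]
  rw [if_neg hji, neg_zero]
  refine le_antisymm ((hD j).minDot_nonpos (h0 j) e) ?_
  have hpair : ∑ k ∈ {i, j}, -minDot (D k) e ≤ ∑ k, -minDot (D k) e :=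
    Finset.sum_le_sum_of_subset_of_nonneg (Finset.subset_univ _)
      fun k _ _ => neg_nonneg.2 ((hD k).minDot_nonpos (h0 k) e)
  rw [Finset.sum_pair (Ne.symm hji), Finset.sum_neg_distrib] at hpair
  linarith [(mem_dualSet_sum_iff hD h0).1 he]

variable (D) in
/-- The polytope `∇_i` of the dual nef partition. -/
def nefDual (i : Fin r) : Set (Fin d → ℝ) :=
  convexHull ℝ ({e ∈ (dualSet (∑ j, D j)).extremePoints ℝ | minDot (D i) e = -1} ∪ {0})

lemma convex_nefDual (i : Fin r) : Convex ℝ (nefDual D i) := convex_convexHull ℝ _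

lemma zero_mem_nefDual (i : Fin r) : (0 : Fin d → ℝ) ∈ nefDual D i :=
  subset_convexHull ℝ _ (Or.inr rfl)

lemma neg_ite_le_dotp_of_mem_nefDual (hD : ∀ i, IsLatticePolytope (D i))
    (h0 : ∀ i, (0 : Fin d → ℝ) ∈ D i) {i j : Fin r} {x y : Fin d → ℝ} (hx : x ∈ D i)
    (hy : y ∈ nefDual D j) : -(if i = j then 1 else 0) ≤ dotp x y := by
  refine convexHull_min ?_ (convex_halfSpace_ge (isLinearMap_dotp_right x) _) hy
  rintro e (⟨he, hej⟩ | rfl)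
  · change _ ≤ dotp x e
    rw [← minDot_eq_neg_ite hD h0 he.1 hej i]
    exact (hD i).minDot_le hx e
  · change _ ≤ dotp x 0
    split_ifs <;> simp

lemma neg_minDot_le_of_mem_gorensteinCone_nefDual (hD : ∀ i, IsLatticePolytope (D i))
    (h0 : ∀ i, (0 : Fin d → ℝ) ∈ D i) {a : Fin r → ℝ} {n : Fin d → ℝ}
    (hp : (a, n) ∈ gorensteinCone (nefDual D)) (i : Fin r) : -minDot (D i) n ≤ a i := by
  obtain ⟨μ, y, hμ, hy, hp⟩ := hp
  rw [Prod.mk.injEq] at hp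
  rw [hp.1, hp.2]
  refine neg_le.2 (le_minDot ⟨0, h0 i⟩ fun x hx => ?_)
  calc -μ i = ∑ j, μ j * -(if i = j then 1 else 0) := by simp
    _ ≤ ∑ j, μ j * dotp x (y j) := Finset.sum_le_sum fun j _ =>
        mul_le_mul_of_nonneg_left (neg_ite_le_dotp_of_mem_nefDual hD h0 hx (hy j)) (hμ j)
    _ = dotp x (∑ j, μ j • y j) := by simp [dotp_sum_right, dotp_smul_right]

/-- The values `minDot (D i) e` are integers in `[-1, 0]` because `e` is a lattice point of `Δ*`,
and they do not all vanish, as otherwise `2 • e ∈ Δ*`. -/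
lemma exists_minDot_eq_neg_one_of_mem_extremePoints
    (hΔ : IsLatticePolytope (dualSet (∑ i, D i))) (hD : ∀ i, IsLatticePolytope (D i))
    (h0 : ∀ i, (0 : Fin d → ℝ) ∈ D i) {e : Fin d → ℝ}
    (he : e ∈ (dualSet (∑ i, D i)).extremePoints ℝ) (he0 : e ≠ 0) :
    ∃ i, minDot (D i) e = -1 := by
  have hmem := mem_dualSet_sum_iff hD h0 (z := e)
  have hneg : ∑ i, minDot (D i) e < 0 := by
    refine (Finset.sum_nonpos fun i _ => (hD i).minDot_nonpos (h0 i) e).lt_of_ne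
      fun hsum => he0 (eq_zero_of_mem_extremePoints_of_two_smul_mem he (zero_mem_dualSet _) ?_)
    rw [mem_dualSet_sum_iff hD h0]
    simp [minDot_smul _ _ zero_le_two, ← Finset.mul_sum, hsum]
  obtain ⟨i, -, hi⟩ := Finset.exists_lt_of_sum_lt (g := fun _ => (0 : ℝ)) (by simpa using hneg)
  have hlow : -1 ≤ minDot (D i) e := by
    have := Finset.single_le_sum (f := fun j => -minDot (D j) e)
      (fun j _ => neg_nonneg.2 ((hD j).minDot_nonpos (h0 j) e)) (Finset.mem_univ i)
    rw [Finset.sum_neg_distrib] at this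
    linarith [hmem.1 he.1]
  obtain ⟨k, hk⟩ := (hD i).exists_int_minDot_eq ⟨0, h0 i⟩ (hΔ.isLatticePt_of_mem_extremePoints he)
  rw [hk] at hi hlow
  have : k = -1 := by
    have : (-1 : ℤ) ≤ k := by exact_mod_cast hlow
    have : k < 0 := by exact_mod_cast hi
    omega
  exact ⟨i, by rw [hk, this]; norm_num⟩

/-- The Batyrev–Borisov decomposition: `Δ*` is the convex hull of `∇_1 ∪ ⋯ ∪ ∇_r`. -/
lemma exists_mem_gorensteinCone_nefDual_of_mem_dualSet
    (hΔ : IsLatticePolytope (dualSet (∑ i, D i))) (hD : ∀ i, IsLatticePolytope (D i))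
    (h0 : ∀ i, (0 : Fin d → ℝ) ∈ D i) {z : Fin d → ℝ} (hz : z ∈ dualSet (∑ i, D i)) :
    ∃ a : Fin r → ℝ, (a, z) ∈ gorensteinCone (nefDual D) ∧ ∑ i, a i ≤ 1 := by
  let T := Prod.snd '' (gorensteinCone (nefDual D) ∩ {p | ∑ i, p.1 i ≤ 1})
  suffices z ∈ T by
    obtain ⟨⟨a, _⟩, ⟨ha, ha1⟩, rfl⟩ := this
    exact ⟨a, ha, ha1⟩
  have hsumle : IsLinearMap ℝ fun p : (Fin r → ℝ) × (Fin d → ℝ) => ∑ i, p.1 i :=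
    ⟨fun p q => Finset.sum_add_distrib, fun c p => by simp [Finset.mul_sum]⟩
  have hT : Convex ℝ T := ((convex_gorensteinCone convex_nefDual).inter
    (convex_halfSpace_le hsumle 1)).linear_image (LinearMap.snd ℝ _ _)
  rw [← hΔ.convexHull_extremePoints] at hz
  refine convexHull_min (fun e he => ?_) hT hz
  by_cases he0 : e = 0
  · exact ⟨(0, e), ⟨he0 ▸ mk_zero_mem_gorensteinCone zero_mem_nefDual le_rfl, by simp⟩, rfl⟩
  obtain ⟨i, hi⟩ := exists_minDot_eq_neg_one_of_mem_extremePoints hΔ hD h0 he he0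
  exact ⟨(Pi.single i 1, e), ⟨single_mem_gorensteinCone zero_mem_nefDual
    (subset_convexHull ℝ _ (Or.inl ⟨he, hi⟩)), by simp⟩, rfl⟩

lemma mem_gorensteinCone_nefDual
    (hΔ : IsReflexivePolytope (∑ i, D i)) (hD : ∀ i, IsLatticePolytope (D i))
    (h0 : ∀ i, (0 : Fin d → ℝ) ∈ D i) {b : Fin r → ℝ} {n : Fin d → ℝ}
    (hb : ∀ i, -minDot (D i) n ≤ b i) : (b, n) ∈ gorensteinCone (nefDual D) := by
  have hm : ∀ i, minDot (D i) n ≤ 0 := fun i => (hD i).minDot_nonpos (h0 i) n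
  obtain ⟨t, ht⟩ : ∃ t, ∑ i, minDot (D i) n = -t := ⟨_, (neg_neg _).symm⟩
  have ht0 : 0 ≤ t := by linarith [Finset.sum_nonpos (s := Finset.univ) fun i _ => hm i]
  rcases ht0.eq_or_lt with rfl | htpos
  · have hn : n = 0 := eq_zero_of_forall_dotp_nonneg hΔ.2.1 fun y hy => by
      linarith [sum_minDot_le_dotp hD hy n]
    rw [hn]
    exact mk_zero_mem_gorensteinCone zero_mem_nefDual fun i =>
      show (0 : ℝ) ≤ b i by linarith [hb i, hm i]
  have hn : t⁻¹ • n ∈ dualSet (∑ i, D i) := by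
    rw [mem_dualSet_sum_iff hD h0]
    simp_rw [minDot_smul _ _ (inv_nonneg.2 htpos.le)]
    rw [← Finset.mul_sum, ht, mul_neg, inv_mul_cancel₀ htpos.ne']
  obtain ⟨a, ha, ha1⟩ := exists_mem_gorensteinCone_nefDual_of_mem_dualSet hΔ.2.2 hD h0 hn
  have hta : (t • a, n) ∈ gorensteinCone (nefDual D) := by
    have := smul_mem_gorensteinCone ha htpos.le
    rwa [Prod.smul_mk, smul_inv_smul₀ htpos.ne'] at this
  have hle := neg_minDot_le_of_mem_gorensteinCone_nefDual hD h0 hta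
  -- `t • a` dominates `-minDot (D ·) n` coordinatewise and has no larger sum, so they agree.
  have heq : ∀ i ∈ Finset.univ, -minDot (D i) n = (t • a) i := by
    refine (Finset.sum_eq_sum_iff_of_le fun i _ => hle i).1 (le_antisymm
      (Finset.sum_le_sum fun i _ => hle i) ?_)
    rw [Finset.sum_neg_distrib, ht, neg_neg]
    simpa [← Finset.mul_sum] using mul_le_mul_of_nonneg_left ha1 htpos.le
  exact mem_gorensteinCone_of_le convex_nefDual zero_mem_nefDual hta
    fun i => heq i (Finset.mem_univ i) ▸ hb i

end NefPartition

theorem gorensteinCone_dual_general {d r : ℕ}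
    (Δ : Set (Fin d → ℝ)) (hΔ : IsReflexivePolytope Δ)
    (D : Fin r → Set (Fin d → ℝ)) (hlat : ∀ i, IsLatticePolytope (D i))
    (h0 : ∀ i, (0 : Fin d → ℝ) ∈ D i) (hsum : Δ = ∑ i, D i)
    (E : Fin r → Set (Fin d → ℝ))
    (hE : ∀ i, E i = {e ∈ Set.extremePoints ℝ (dualSet Δ) | minDot (D i) e = -1})
    (N : Fin r → Set (Fin d → ℝ))
    (hN : ∀ i, N i = convexHull ℝ (E i ∪ {0})) :
    gorensteinCone N
      = {q : (Fin r → ℝ) × (Fin d → ℝ) | ∀ p ∈ gorensteinCone D, 0 ≤ extPair p q} := by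
  subst hsum
  obtain rfl : N = nefDual D := funext fun i => by rw [hN, hE]; rfl
  refine Set.ext fun ⟨b, n⟩ => Iff.trans ?_ (mem_dual_gorensteinCone_iff hlat h0).symm
  exact ⟨neg_minDot_le_of_mem_gorensteinCone_nefDual hlat h0,
    mem_gorensteinCone_nefDual hΔ hlat h0⟩

/-- Remark 4.2, Batyrev–Borisov: the Gorenstein cone of the dual
nef partition is the dual cone of the Gorenstein cone of the nef partition. -/
theorem gorensteinCone_dual {d r : ℕ} (hd : 1 ≤ d)
    (Δ : Set (Fin d → ℝ)) (hΔ : IsReflexivePolytope Δ)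
    (D : Fin r → Set (Fin d → ℝ)) (hlat : ∀ i, IsLatticePolytope (D i))
    (h0 : ∀ i, (0 : Fin d → ℝ) ∈ D i) (hsum : Δ = ∑ i, D i)
    (hnef : ∀ i j, i ≠ j → D i ∩ D j = {0})
    (E : Fin r → Set (Fin d → ℝ))
    (hE : ∀ i, E i = {e ∈ Set.extremePoints ℝ (dualSet Δ) | minDot (D i) e = -1})
    (N : Fin r → Set (Fin d → ℝ))
    (hN : ∀ i, N i = convexHull ℝ (E i ∪ {0})) :
    gorensteinCone N
      = {q : (Fin r → ℝ) × (Fin d → ℝ) | ∀ p ∈ gorensteinCone D, 0 ≤ extPair p q} :=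
  gorensteinCone_dual_general Δ hΔ D hlat h0 hsum E hE N hN
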